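/- The subgroups K₁ and K₂ of G intersect trivially, K₁ ∩ K₂ = {0}; consequently K₁ + K₂ is isomorphic to the direct sum K₁ ⊕ K₂ and has exactly μ₁μ₂ elements. -/

import Mathlib

noncomputable section

/-- The coercion of an integer vector in `ℤ³` to `ℝ³`. -/
def coe3 (v : Fin 3 → ℤ) : Fin 3 → ℝ := fun i => (v i : ℝ)

/-- A vector of `ℤ³` is primitive if the greatest common divisor of its components is 1. -/
def IsPrimitive (v : Fin 3 → ℤ) : Prop := Int.gcd (v 0) (Int.gcd (v 1) (v 2)) = 1

/-- The fundamental parallelepiped spanned by two vectors: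
`◊(a,b) = {s•a + t•b : s,t ∈ [0,1)}`. -/
def para2 (a b : Fin 3 → ℝ) : Set (Fin 3 → ℝ) :=
  {x | ∃ s t : ℝ, 0 ≤ s ∧ s < 1 ∧ 0 ≤ t ∧ t < 1 ∧ x = s • a + t • b}

/-- The fundamental parallelepiped spanned by three vectors:
`◊(a,b,c) = {s•a + t•b + u•c : s,t,u ∈ [0,1)}`. -/
def para3 (a b c : Fin 3 → ℝ) : Set (Fin 3 → ℝ) :=
  {x | ∃ s t u : ℝ, 0 ≤ s ∧ s < 1 ∧ 0 ≤ t ∧ t < 1 ∧ 0 ≤ u ∧ u < 1 ∧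
    x = s • a + t • b + u • c}

/-- The integral points `ℤ³ ∩ ◊(a,b)` of a two-dimensional fundamental parallelepiped. -/
def H2pts (a b : Fin 3 → ℤ) : Set (Fin 3 → ℤ) := {x | coe3 x ∈ para2 (coe3 a) (coe3 b)}

/-- The integral points `ℤ³ ∩ ◊(a,b,c)` of a three-dimensional fundamental parallelepiped. -/
def H3pts (a b c : Fin 3 → ℤ) : Set (Fin 3 → ℤ) :=
  {x | coe3 x ∈ para3 (coe3 a) (coe3 b) (coe3 c)}

/-- The subgroup `ℤ³ ∩ (ℝa + ℝb)` of `ℤ³` of integral points of the plane spanned by `a, b`. -/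
def planeSubgroup (a b : Fin 3 → ℝ) : AddSubgroup (Fin 3 → ℤ) where
  carrier := {x | ∃ s t : ℝ, coe3 x = s • a + t • b}
  zero_mem' := ⟨0, 0, by funext i; simp [coe3]⟩
  add_mem' := by
    rintro x y ⟨s, t, hx⟩ ⟨u, v, hy⟩
    refine ⟨s + u, t + v, ?_⟩
    funext i
    have h1 := congrFun hx i
    have h2 := congrFun hy i
    simp only [coe3, Pi.add_apply, Pi.smul_apply, smul_eq_mul, Int.cast_add] at h1 h2 ⊢
    rw [h1, h2]; ring
  neg_mem' := by
    rintro x ⟨s, t, hx⟩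
    refine ⟨-s, -t, ?_⟩
    funext i
    have h1 := congrFun hx i
    simp only [coe3, Pi.add_apply, Pi.neg_apply, Pi.smul_apply, smul_eq_mul,
      Int.cast_neg, neg_smul] at h1 ⊢
    rw [h1]; ring

/-- The lattice `Λ = ℤw₁ + ℤw₂ + ℤw₃`. -/
def lattice3 (w₁ w₂ w₃ : Fin 3 → ℤ) : AddSubgroup (Fin 3 → ℤ) :=
  AddSubgroup.closure {w₁, w₂, w₃}

/-- The finite abelian group `G = ℤ³/Λ`. -/
abbrev Gquot (w₁ w₂ w₃ : Fin 3 → ℤ) := (Fin 3 → ℤ) ⧸ lattice3 w₁ w₂ w₃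

/-- The subgroup `K` of `G = ℤ³/Λ` given by the image of `ℤ³ ∩ (ℝa + ℝb)`. -/
def Ksub (w₁ w₂ w₃ a b : Fin 3 → ℤ) : AddSubgroup (Gquot w₁ w₂ w₃) :=
  AddSubgroup.map (QuotientAddGroup.mk' (lattice3 w₁ w₂ w₃)) (planeSubgroup (coe3 a) (coe3 b))

/-!
A class in `K₁ ∩ K₂` is represented by some `x = s w₂ + t w₃ ∈ ℤ³` that is congruent modulo `Λ`
to some `y = u w₁ + v w₃ ∈ ℤ³`. Comparing coordinates of `y - x ∈ Λ` in the basis `w₁, w₂, w₃`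
shows `s ∈ ℤ`, so `x - s w₂ = t w₃` is an integral point of the line `ℝw₃`; as `w₃` is
primitive, `t ∈ ℤ`, hence `x ∈ Λ`. For the count, `Hᵢ` is a set of representatives of the
integral points of the plane modulo `Λ`: taking fractional parts of the two coordinates lands in
`Hᵢ`, and two points of `Hᵢ` that differ by an element of `Λ` (whose coordinates are integers)
coincide.
-/

theorem LinearIndependent.eq_of_triple {R M : Type*} [Semiring R] [AddCommMonoid M] [Module R M]
    {x y z : M} (h : LinearIndependent R ![x, y, z]) {a b c a' b' c' : R}
    (h' : a • x + b • y + c • z = a' • x + b' • y + c' • z) : a = a' ∧ b = b' ∧ c = c' := by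
  have := Fintype.linearIndependent_iffₛ.mp h ![a, b, c] ![a', b', c']
    (by simpa [Fin.sum_univ_three] using h')
  exact ⟨this 0, this 1, this 2⟩

namespace AddSubgroup

variable {G : Type*} [AddCommGroup G] {H K : AddSubgroup G}

theorem range_subtype_coprod_subtype : (H.subtype.coprod K.subtype).range = H ⊔ K := by
  ext x
  simp [AddMonoidHom.mem_range, mem_sup]

noncomputable def prodAddEquivSupOfDisjoint (h : Disjoint H K) : (H × K) ≃+ ↥(H ⊔ K) :=
  (AddMonoidHom.ofInjective (f := H.subtype.coprod K.subtype) (add_injective_of_disjoint h)).trans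
    (AddEquiv.addSubgroupCongr range_subtype_coprod_subtype)

end AddSubgroup

theorem coe3_add (x y : Fin 3 → ℤ) : coe3 (x + y) = coe3 x + coe3 y := by
  funext i; simp [coe3]

theorem coe3_sub (x y : Fin 3 → ℤ) : coe3 (x - y) = coe3 x - coe3 y := by
  funext i; simp [coe3]

theorem coe3_zsmul (n : ℤ) (x : Fin 3 → ℤ) : coe3 (n • x) = (n : ℝ) • coe3 x := by
  funext i; simp [coe3]

theorem coe3_injective : Function.Injective coe3 := fun x y h =>
  funext fun i => by simpa [coe3] using congrFun h i

theorem IsPrimitive.exists_sum_mul_eq_one {v : Fin 3 → ℤ} (hv : IsPrimitive v) :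
    ∃ c₀ c₁ c₂ : ℤ, c₀ * v 0 + c₁ * v 1 + c₂ * v 2 = 1 := by
  obtain ⟨A, B, hAB⟩ := Int.isCoprime_iff_gcd_eq_one.mpr hv
  refine ⟨A, B * Int.gcdA (v 1) (v 2), B * Int.gcdB (v 1) (v 2), ?_⟩
  rw [← hAB, Int.gcd_eq_gcd_ab (v 1) (v 2)]
  ring

theorem IsPrimitive.exists_int_eq_of_coe3_eq_smul {v x : Fin 3 → ℤ} (hv : IsPrimitive v) {t : ℝ}
    (h : coe3 x = t • coe3 v) : ∃ n : ℤ, t = n := by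
  obtain ⟨c₀, c₁, c₂, hc⟩ := hv.exists_sum_mul_eq_one
  have hx : ∀ i, (x i : ℝ) = t * v i := fun i => congrFun h i
  have hc' : (c₀ : ℝ) * v 0 + c₁ * v 1 + c₂ * v 2 = 1 := by exact_mod_cast hc
  refine ⟨c₀ * x 0 + c₁ * x 1 + c₂ * x 2, ?_⟩
  push_cast
  rw [hx 0, hx 1, hx 2]
  linear_combination (-t) * hc'

theorem eq_of_sub_eq_intCast {R : Type*} [Ring R] [LinearOrder R] [IsStrictOrderedRing R]
    [FloorRing R] {s s' : R} (hs : 0 ≤ s ∧ s < 1) (hs' : 0 ≤ s' ∧ s' < 1)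
    (h : ∃ m : ℤ, s - s' = m) : s = s' :=
  calc s = Int.fract s := (Int.fract_eq_self.mpr hs).symm
    _ = Int.fract s' := Int.fract_eq_fract.mpr h
    _ = s' := Int.fract_eq_self.mpr hs'

section Parallelogram

variable {a b x y : Fin 3 → ℤ}

theorem exists_mem_H2pts_sub_mem_closure (hx : x ∈ planeSubgroup (coe3 a) (coe3 b)) :
    ∃ y ∈ H2pts a b, x - y ∈ AddSubgroup.closure {a, b} := by
  obtain ⟨s, t, hst⟩ := hx
  refine ⟨x - (⌊s⌋ • a + ⌊t⌋ • b), ⟨Int.fract s, Int.fract t, Int.fract_nonneg s,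
    Int.fract_lt_one s, Int.fract_nonneg t, Int.fract_lt_one t, ?_⟩, ?_⟩
  · rw [coe3_sub, coe3_add, coe3_zsmul, coe3_zsmul, hst, Int.fract, Int.fract]
    module
  · rw [sub_sub_cancel]
    exact AddSubgroup.mem_closure_pair.mpr ⟨_, _, rfl⟩

variable {L : AddSubgroup (Fin 3 → ℤ)}

theorem eq_of_mem_H2pts_of_sub_mem
    (hL : ∀ z ∈ L, ∀ s t : ℝ, coe3 z = s • coe3 a + t • coe3 b →
      (∃ m : ℤ, s = m) ∧ ∃ n : ℤ, t = n)
    (hx : x ∈ H2pts a b) (hy : y ∈ H2pts a b) (hxy : x - y ∈ L) : x = y := by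
  obtain ⟨s, t, hs₀, hs₁, ht₀, ht₁, hx⟩ := hx
  obtain ⟨s', t', hs₀', hs₁', ht₀', ht₁', hy⟩ := hy
  obtain ⟨hs, ht⟩ := hL _ hxy (s - s') (t - t') (by rw [coe3_sub, hx, hy]; module)
  have hss' := eq_of_sub_eq_intCast ⟨hs₀, hs₁⟩ ⟨hs₀', hs₁'⟩ hs
  have htt' := eq_of_sub_eq_intCast ⟨ht₀, ht₁⟩ ⟨ht₀', ht₁'⟩ ht
  exact coe3_injective (by rw [hx, hy, hss', htt'])

theorem card_map_planeSubgroup (ha : a ∈ L) (hb : b ∈ L)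
    (hL : ∀ z ∈ L, ∀ s t : ℝ, coe3 z = s • coe3 a + t • coe3 b →
      (∃ m : ℤ, s = m) ∧ ∃ n : ℤ, t = n) :
    Nat.card ((planeSubgroup (coe3 a) (coe3 b)).map (QuotientAddGroup.mk' L)) =
      (H2pts a b).ncard := by
  have himage : ((planeSubgroup (coe3 a) (coe3 b)).map (QuotientAddGroup.mk' L) : Set (_ ⧸ L)) =
      QuotientAddGroup.mk' L '' H2pts a b := by
    ext g
    constructor
    · rintro ⟨x, hx, rfl⟩
      obtain ⟨y, hy, hxy⟩ := exists_mem_H2pts_sub_mem_closure hx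
      have hab : AddSubgroup.closure {a, b} ≤ L := by
        rw [AddSubgroup.closure_le]
        exact Set.insert_subset ha (Set.singleton_subset_iff.mpr hb)
      exact ⟨y, hy, ((QuotientAddGroup.eq_iff_sub_mem).mpr (hab hxy)).symm⟩
    · rintro ⟨x, ⟨s, t, -, -, -, -, hx⟩, rfl⟩
      exact ⟨x, ⟨s, t, hx⟩, rfl⟩
  have hinj : Set.InjOn (QuotientAddGroup.mk' L) (H2pts a b) := fun x hx y hy hxy =>
    eq_of_mem_H2pts_of_sub_mem hL hx hy (QuotientAddGroup.eq_iff_sub_mem.mp hxy)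
  rw [← SetLike.coe_sort_coe, Nat.card_coe_set_eq, himage, hinj.ncard_image]

end Parallelogram

section Lattice

variable {w₁ w₂ w₃ x y : Fin 3 → ℤ}

theorem mem_lattice3 : x ∈ lattice3 w₁ w₂ w₃ ↔ ∃ p q r : ℤ, p • w₁ + q • w₂ + r • w₃ = x := by
  rw [lattice3, ← Set.singleton_union, AddSubgroup.closure_union, AddSubgroup.mem_sup]
  simp_rw [AddSubgroup.mem_closure_singleton, AddSubgroup.mem_closure_pair]
  constructor
  · rintro ⟨_, ⟨p, rfl⟩, _, ⟨q, r, rfl⟩, rfl⟩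
    exact ⟨p, q, r, by abel⟩
  · rintro ⟨p, q, r, rfl⟩
    exact ⟨_, ⟨p, rfl⟩, _, ⟨q, r, rfl⟩, by abel⟩

theorem exists_intCast_coeffs_of_mem_lattice3
    (hli : LinearIndependent ℝ ![coe3 w₁, coe3 w₂, coe3 w₃]) (hx : x ∈ lattice3 w₁ w₂ w₃)
    {a b c : ℝ} (h : coe3 x = a • coe3 w₁ + b • coe3 w₂ + c • coe3 w₃) :
    (∃ p : ℤ, a = p) ∧ (∃ q : ℤ, b = q) ∧ ∃ r : ℤ, c = r := by
  obtain ⟨p, q, r, rfl⟩ := mem_lattice3.mp hx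
  rw [coe3_add, coe3_add, coe3_zsmul, coe3_zsmul, coe3_zsmul] at h
  obtain ⟨hp, hq, hr⟩ := hli.eq_of_triple h.symm
  exact ⟨⟨p, hp⟩, ⟨q, hq⟩, r, hr⟩

theorem mem_lattice3_of_sub_mem_of_mem_planeSubgroup (hp₃ : IsPrimitive w₃)
    (hli : LinearIndependent ℝ ![coe3 w₁, coe3 w₂, coe3 w₃])
    (hx : x ∈ planeSubgroup (coe3 w₂) (coe3 w₃)) (hy : y ∈ planeSubgroup (coe3 w₁) (coe3 w₃))
    (hxy : y - x ∈ lattice3 w₁ w₂ w₃) : x ∈ lattice3 w₁ w₂ w₃ := by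
  obtain ⟨s, t, hx⟩ := hx
  obtain ⟨u, v, hy⟩ := hy
  obtain ⟨-, ⟨q, hq⟩, -⟩ := exists_intCast_coeffs_of_mem_lattice3 hli hxy
    (a := u) (b := -s) (c := v - t) (by rw [coe3_sub, hx, hy]; module)
  have hxq : coe3 (x + q • w₂) = t • coe3 w₃ := by
    rw [coe3_add, coe3_zsmul, hx, ← hq]
    module
  obtain ⟨n, rfl⟩ := hp₃.exists_int_eq_of_coe3_eq_smul hxq
  have hxn : x + q • w₂ = n • w₃ := coe3_injective (by rw [hxq, coe3_zsmul])
  rw [eq_sub_of_add_eq hxn]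
  exact sub_mem (zsmul_mem (AddSubgroup.subset_closure (by simp)) n)
    (zsmul_mem (AddSubgroup.subset_closure (by simp)) q)

theorem Ksub_inf_Ksub_eq_bot (hp₃ : IsPrimitive w₃)
    (hli : LinearIndependent ℝ ![coe3 w₁, coe3 w₂, coe3 w₃]) :
    Ksub w₁ w₂ w₃ w₂ w₃ ⊓ Ksub w₁ w₂ w₃ w₁ w₃ = ⊥ := by
  rw [eq_bot_iff]
  rintro _ ⟨⟨x, hx, rfl⟩, y, hy, hyx⟩
  rw [AddSubgroup.mem_bot, QuotientAddGroup.mk'_apply, QuotientAddGroup.eq_zero_iff]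
  exact mem_lattice3_of_sub_mem_of_mem_planeSubgroup hp₃ hli hx hy
    (QuotientAddGroup.eq_iff_sub_mem.mp hyx)

end Lattice

theorem K1_inter_K2_trivial_general (w₁ w₂ w₃ : Fin 3 → ℤ)
    (hp₃ : IsPrimitive w₃)
    (hli : LinearIndependent ℝ ![coe3 w₁, coe3 w₂, coe3 w₃])
    (μ₁ μ₂ : ℕ) (hμ₁ : μ₁ = (H2pts w₂ w₃).ncard) (hμ₂ : μ₂ = (H2pts w₁ w₃).ncard) :
    Ksub w₁ w₂ w₃ w₂ w₃ ⊓ Ksub w₁ w₂ w₃ w₁ w₃ = ⊥ ∧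
    Nonempty ((↥(Ksub w₁ w₂ w₃ w₂ w₃ ⊔ Ksub w₁ w₂ w₃ w₁ w₃)) ≃+
      (↥(Ksub w₁ w₂ w₃ w₂ w₃) × ↥(Ksub w₁ w₂ w₃ w₁ w₃))) ∧
    Nat.card ↥(Ksub w₁ w₂ w₃ w₂ w₃ ⊔ Ksub w₁ w₂ w₃ w₁ w₃) = μ₁ * μ₂ := by
  have hw₁ : w₁ ∈ lattice3 w₁ w₂ w₃ := AddSubgroup.subset_closure (by simp)
  have hw₂ : w₂ ∈ lattice3 w₁ w₂ w₃ := AddSubgroup.subset_closure (by simp)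
  have hw₃ : w₃ ∈ lattice3 w₁ w₂ w₃ := AddSubgroup.subset_closure (by simp)
  have hcard₁ : Nat.card (Ksub w₁ w₂ w₃ w₂ w₃) = μ₁ := by
    rw [hμ₁]
    refine card_map_planeSubgroup hw₂ hw₃ fun z hz s t h => ?_
    obtain ⟨-, hs, ht⟩ := exists_intCast_coeffs_of_mem_lattice3 hli hz (a := 0) (b := s) (c := t)
      (by rw [h, zero_smul, zero_add])
    exact ⟨hs, ht⟩
  have hcard₂ : Nat.card (Ksub w₁ w₂ w₃ w₁ w₃) = μ₂ := by
    rw [hμ₂]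
    refine card_map_planeSubgroup hw₁ hw₃ fun z hz s t h => ?_
    obtain ⟨hs, -, ht⟩ := exists_intCast_coeffs_of_mem_lattice3 hli hz (a := s) (b := 0) (c := t)
      (by rw [h, zero_smul, add_zero])
    exact ⟨hs, ht⟩
  have hd := Ksub_inf_Ksub_eq_bot hp₃ hli
  let e := AddSubgroup.prodAddEquivSupOfDisjoint (disjoint_iff.mpr hd)
  refine ⟨hd, ⟨e.symm⟩, ?_⟩
  rw [← Nat.card_congr e.toEquiv, Nat.card_prod, hcard₁, hcard₂]

/-- The subgroups `K₁` and `K₂` of `G` intersect trivially,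
`K₁ ∩ K₂ = {0}`; consequently `K₁ + K₂` is isomorphic to the direct sum `K₁ ⊕ K₂` and has
exactly `μ₁μ₂` elements. -/
theorem K1_inter_K2_trivial (w₁ w₂ w₃ : Fin 3 → ℤ)
    (hnn₁ : ∀ i, 0 ≤ w₁ i) (hnn₂ : ∀ i, 0 ≤ w₂ i) (hnn₃ : ∀ i, 0 ≤ w₃ i)
    (hp₁ : IsPrimitive w₁) (hp₂ : IsPrimitive w₂) (hp₃ : IsPrimitive w₃)
    (hli : LinearIndependent ℝ ![coe3 w₁, coe3 w₂, coe3 w₃])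
    (μ₁ μ₂ : ℕ) (hμ₁ : μ₁ = (H2pts w₂ w₃).ncard) (hμ₂ : μ₂ = (H2pts w₁ w₃).ncard) :
    Ksub w₁ w₂ w₃ w₂ w₃ ⊓ Ksub w₁ w₂ w₃ w₁ w₃ = ⊥ ∧
    Nonempty ((↥(Ksub w₁ w₂ w₃ w₂ w₃ ⊔ Ksub w₁ w₂ w₃ w₁ w₃)) ≃+
      (↥(Ksub w₁ w₂ w₃ w₂ w₃) × ↥(Ksub w₁ w₂ w₃ w₁ w₃))) ∧
    Nat.card ↥(Ksub w₁ w₂ w₃ w₂ w₃ ⊔ Ksub w₁ w₂ w₃ w₁ w₃) = μ₁ * μ₂ :=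
  K1_inter_K2_trivial_general w₁ w₂ w₃ hp₃ hli μ₁ μ₂ hμ₁ hμ₂
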